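/- If (a_1,...,a_n) is the graded reverse lexicographically minimal part listing among all part listings w with P(w) isomorphic to a given unit interval order U, then (a_1,...,a_n) is the area sequence of a Dyck path, i.e., a_1 = 0 and a_i ≤ a_{i−1}+1 for all i. -/
import Mathlib


/-- A unit interval order on `Fin n`: `x ≺ y` implies `x < y`, and
`x ≺ y` implies `x' ≺ y'` for all `x' ≤ x` and `y' ≥ y`. -/
def IsUIO {n : ℕ} (r : Fin n → Fin n → Prop) : Prop :=
  (∀ x y, r x y → x < y) ∧
  (∀ x y, r x y → ∀ x' y', x' ≤ x → y ≤ y' → r x' y')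

/-- The poset `P(w)` of a part listing `w`: `i ≺ j` iff `w j − w i ≥ 2`,
or `w j − w i = 1` and `i < j`. -/
def Prel {n : ℕ} (w : Fin n → ℕ) (i j : Fin n) : Prop :=
  w i + 2 ≤ w j ∨ (w j = w i + 1 ∧ i < j)

/-- An area sequence of a Dyck path: `a₁ = 0` and `aᵢ ≤ aᵢ₋₁ + 1`. -/
def IsAreaSeq {n : ℕ} (w : Fin n → ℕ) : Prop :=
  (∀ h : 0 < n, w ⟨0, h⟩ = 0) ∧
  ∀ i : Fin n, ∀ h : i.val + 1 < n, w ⟨i.val + 1, h⟩ ≤ w i + 1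

/-- Graded reverse lexicographic order: smaller sum, or equal sums and
*larger* entry at the first position where the sequences differ. -/
def GrevlexLt {n : ℕ} (a b : Fin n → ℕ) : Prop :=
  (∑ i, a i) < (∑ i, b i) ∨
  ((∑ i, a i) = (∑ i, b i) ∧ ∃ j, b j < a j ∧ ∀ k, k < j → a k = b k)

/-- If `a` is the graded reverse lexicographically minimal
part listing among all part listings `w` with `P(w)` isomorphic to a given
unit interval order `U`, then `a` is the area sequence of a Dyck path. -/
theorem grevlex_min_isAreaSeq {n : ℕ} (r : Fin n → Fin n → Prop) (h : IsUIO r)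
    (a : Fin n → ℕ)
    (ha : ∃ e : Fin n ≃ Fin n, ∀ i j : Fin n, Prel a i j ↔ r (e i) (e j))
    (hmin : ∀ b : Fin n → ℕ,
      (∃ e : Fin n ≃ Fin n, ∀ i j : Fin n, Prel b i j ↔ r (e i) (e j)) →
      ¬ GrevlexLt b a) :
    IsAreaSeq a := by
  obtain ⟨e, he⟩ := ha
  constructor
  · -- a 0 = 0
    intro hn
    by_contra h0
    have hv : 1 ≤ a ⟨0, hn⟩ := Nat.one_le_iff_ne_zero.mpr h0
    obtain ⟨m, rfl⟩ : ∃ m, n = m + 1 := ⟨n - 1, by omega⟩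
    set σ : Fin (m+1) ≃ Fin (m+1) := finRotate (m+1) with hσ
    have hσval : ∀ x : Fin (m+1), (σ x).val = if x.val = m then 0 else x.val + 1 := by
      intro x
      rw [hσ, finRotate_succ_apply, Fin.val_add_one]
      by_cases hx : x = Fin.last m
      · simp [hx]
      · have hx' : x.val ≠ m := fun hh => hx (Fin.ext hh)
        simp [hx, hx']
    set b : Fin (m+1) → ℕ := fun x =>
      if h : x.val = m then a ⟨0, hn⟩ - 1
      else a ⟨x.val + 1, by have := x.isLt; omega⟩ with hb
    have key : ∀ z : Fin (m+1), z.val ≠ m → a (σ z) = b z := by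
      intro z hz
      have h1 : σ z = ⟨z.val + 1, by have := z.isLt; omega⟩ :=
        Fin.ext (by rw [hσval]; simp [hz])
      rw [h1]
      simp only [hb]
      rw [dif_neg hz]
    have keyLast : ∀ z : Fin (m+1), z.val = m → σ z = ⟨0, hn⟩ := by
      intro z hz
      exact Fin.ext (by rw [hσval]; simp [hz])
    have hiso : ∀ x y, Prel b x y ↔ Prel a (σ x) (σ y) := by
      intro x y
      by_cases hxm : x.val = m <;> by_cases hym : y.val = m
      · have hxy : x = y := Fin.ext (by omega)
        subst hxy
        simp only [Prel, Fin.lt_irrefl, and_false, or_false]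
        omega
      · -- x last, y not
        have h1 : σ x = ⟨0, hn⟩ := keyLast x hxm
        have h2 : a (σ y) = b y := key y hym
        have h3 : b x = a ⟨0, hn⟩ - 1 := by simp only [hb]; rw [dif_pos hxm]
        have hy := y.isLt
        simp only [Prel, h1, h2, h3, Fin.lt_def]
        rw [hσval y]
        simp only [if_neg hym]
        omega
      · -- y last, x not
        have h1 : σ y = ⟨0, hn⟩ := keyLast y hym
        have h2 : a (σ x) = b x := key x hxm
        have h3 : b y = a ⟨0, hn⟩ - 1 := by simp only [hb]; rw [dif_pos hym]
        have hx := x.isLt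
        simp only [Prel, h1, h2, h3, Fin.lt_def]
        rw [hσval x]
        simp only [if_neg hxm]
        omega
      · have h2 : a (σ x) = b x := key x hxm
        have h3 : a (σ y) = b y := key y hym
        simp only [Prel, h2, h3, Fin.lt_def]
        rw [hσval x, hσval y]
        simp only [if_neg hxm, if_neg hym]
        omega
    have hsum : ∑ i, b i < ∑ i, a i := by
      have h1 : ∑ i : Fin (m+1), a (σ i) = ∑ i, a i := Equiv.sum_comp σ a
      rw [← h1]
      apply Finset.sum_lt_sum
      · intro i _
        by_cases him : i.val = m
        · have h3 : b i = a ⟨0, hn⟩ - 1 := by simp only [hb]; rw [dif_pos him]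
          rw [h3, keyLast i him]
          omega
        · rw [← key i him]
      · refine ⟨⟨m, by omega⟩, Finset.mem_univ _, ?_⟩
        have h3 : b ⟨m, by omega⟩ = a ⟨0, hn⟩ - 1 := by simp [hb]
        rw [h3, keyLast ⟨m, by omega⟩ rfl]
        omega
    exact hmin b ⟨σ.trans e, fun i j => (hiso i j).trans (he (σ i) (σ j))⟩ (Or.inl hsum)
  · -- steps
    intro i hi
    by_contra hcon
    push_neg at hcon
    set j : Fin n := ⟨i.val + 1, hi⟩ with hj
    have hjv : j.val = i.val + 1 := rfl
    have hij : a i + 2 ≤ a j := by omega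
    set σ : Fin n ≃ Fin n := Equiv.swap i j with hσ
    have hkey : ∀ x y : Fin n, a (σ y) = a (σ x) + 1 → (x < y ↔ σ x < σ y) := by
      intro x y hval
      simp only [hσ, Equiv.swap_apply_def] at hval ⊢
      split_ifs at hval ⊢ with h1 h2 h3 h4 <;>
        simp only [Fin.ext_iff, Fin.lt_def] at * <;> omega
    have hiso : ∀ x y, Prel (fun z => a (σ z)) x y ↔ Prel a (σ x) (σ y) := by
      intro x y
      simp only [Prel]
      constructor
      · rintro (h1 | ⟨h1, h2⟩)
        · exact Or.inl h1
        · exact Or.inr ⟨h1, (hkey x y h1).mp h2⟩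
      · rintro (h1 | ⟨h1, h2⟩)
        · exact Or.inl h1
        · exact Or.inr ⟨h1, (hkey x y h1).mpr h2⟩
    refine hmin (fun z => a (σ z)) ⟨σ.trans e, fun x y => (hiso x y).trans (he _ _)⟩
      (Or.inr ⟨Equiv.sum_comp σ a, i, ?_, ?_⟩)
    · show a i < a (σ i)
      rw [hσ, Equiv.swap_apply_left]
      omega
    · intro k hk
      have hki : k ≠ i := ne_of_lt hk
      have hkj : k ≠ j := by
        intro hh
        rw [Fin.lt_def] at hk
        rw [hh] at hk
        omega
      show a (σ k) = a k
      rw [hσ, Equiv.swap_apply_of_ne_of_ne hki hkj]
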